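/- arXiv:1510.01816 — 4 statements merged into one kernel-verified Lean document; each statement's English description precedes it below -/
import Mathlib

section
/- Every optimal point (τ*, ε*) of problem (P2) satisfies τ_i* > 0 for every i = 0, 1, …, K. -/
/-- The rate function `r(t,x) = t·log(1 + x/t)` for `t > 0`, and `r(0,x) = 0`. -/
noncomputable def rate (t x : ℝ) : ℝ := if 0 < t then t * Real.log (1 + x / t) else 0

/-- The feasible set of problem (P2): `τ_i ≥ 0`, `0 ≤ ε_i ≤ τ_i·P_P` for `0 ≤ i ≤ K`,
`Σ ε_i ≤ P_A` and `Σ τ_i ≤ 1`. -/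
def FeasibleP2 (K : ℕ) (PA PP : ℝ) (τ ε : ℕ → ℝ) : Prop :=
  (∀ i ≤ K, 0 ≤ τ i) ∧ (∀ i ≤ K, 0 ≤ ε i ∧ ε i ≤ τ i * PP) ∧
  (∑ i ∈ Finset.range (K + 1), ε i ≤ PA) ∧ (∑ i ∈ Finset.range (K + 1), τ i ≤ 1)

/-- The objective of problem (P2): `R(τ,ε) = Σ_{i=1}^K r(τ_i, γ_i·Σ_{j=0}^{i−1} ε_j)`. -/
noncomputable def ObjP2 (K : ℕ) (γ τ ε : ℕ → ℝ) : ℝ :=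
  ∑ i ∈ Finset.Icc 1 K, rate (τ i) (γ i * ∑ j ∈ Finset.range i, ε j)

/-!
Moving energy `e` from the first slot `j ≥ 1` that carries any to slot `0`, together with the time
`e / P_P` it occupies, would raise every partial sum `Σ_{k<i} ε_k` and make the vanishing term `j`
positive; so at an optimum slot `0` carries energy, hence time. If a slot `m ≥ 1` were idle, giving
it time `δ` taken from slot `0` together with energy `P_P δ` would gain `rate δ (γ_m ε_0 / 2) ≈
δ log (1 / δ)` at term `m`, while every other term loses at most `γ_i P_P δ` because `rate t` is
1-Lipschitz on `[0, ∞)`; for small `δ` this is a strict improvement.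
-/

open Finset Filter Topology Real

section Rate

variable {t x y : ℝ}

lemma rate_of_pos (ht : 0 < t) (x : ℝ) : rate t x = t * log (1 + x / t) := if_pos ht

lemma rate_of_nonpos (ht : t ≤ 0) (x : ℝ) : rate t x = 0 := if_neg ht.not_gt

@[simp] lemma rate_zero_left (x : ℝ) : rate 0 x = 0 := rate_of_nonpos le_rfl x

@[simp] lemma rate_zero_right (t : ℝ) : rate t 0 = 0 := by simp [rate]

lemma rate_lt_rate (ht : 0 < t) (hx : 0 ≤ x) (hxy : x < y) : rate t x < rate t y := by
  have : 0 < 1 + x / t := by positivity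
  rw [rate_of_pos ht, rate_of_pos ht]
  gcongr

lemma rate_le_rate (hx : 0 ≤ x) (hxy : x ≤ y) : rate t x ≤ rate t y := by
  rcases le_or_gt t 0 with ht | ht
  · rw [rate_of_nonpos ht, rate_of_nonpos ht]
  · rcases hxy.eq_or_lt with rfl | hxy
    · rfl
    · exact (rate_lt_rate ht hx hxy).le

lemma rate_nonneg (hx : 0 ≤ x) : 0 ≤ rate t x :=
  rate_zero_right t ▸ rate_le_rate le_rfl hx

lemma rate_pos (ht : 0 < t) (hx : 0 < x) : 0 < rate t x :=
  rate_zero_right t ▸ rate_lt_rate ht le_rfl hx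

lemma rate_le_rate_add (hy : 0 ≤ y) (hyx : y ≤ x) : rate t x ≤ rate t y + (x - y) := by
  rcases le_or_gt t 0 with ht | ht
  · rw [rate_of_nonpos ht, rate_of_nonpos ht]; linarith
  have hx : 0 ≤ x := hy.trans hyx
  have hy' : 0 < 1 + y / t := by positivity
  have hx' : 0 < 1 + x / t := by positivity
  have hlog : log (1 + x / t) - log (1 + y / t) ≤ (x - y) / (t + y) := by
    rw [← log_div hx'.ne' hy'.ne']
    calc log ((1 + x / t) / (1 + y / t)) ≤ (1 + x / t) / (1 + y / t) - 1 :=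
          log_le_sub_one_of_pos (div_pos hx' hy')
      _ = (x - y) / (t + y) := by field_simp; ring
  have hfrac : t * ((x - y) / (t + y)) ≤ x - y := by
    rw [mul_div_assoc', div_le_iff₀ (add_pos_of_pos_of_nonneg ht hy)]
    nlinarith
  rw [rate_of_pos ht, rate_of_pos ht]
  nlinarith

lemma rate_le_rate_add_of_sub_le {c : ℝ} (hc : 0 ≤ c) (hcx : c ≤ x) (hxy : x - c ≤ y) :
    rate t x ≤ rate t y + c := by
  have hlip := rate_le_rate_add (t := t) (sub_nonneg.2 hcx) (sub_le_self x hc)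
  have hmono := rate_le_rate (t := t) (sub_nonneg.2 hcx) hxy
  linarith

lemma eventually_mul_lt_rate {A : ℝ} (hA : 0 < A) (C : ℝ) :
    ∀ᶠ δ in 𝓝[>] 0, C * δ < rate δ A := by
  have hlog : Tendsto (fun δ => log (1 + A / δ)) (𝓝[>] 0) atTop := by
    simp_rw [div_eq_mul_inv]
    exact tendsto_log_atTop.comp
      (tendsto_atTop_add_const_left _ 1 (tendsto_inv_nhdsGT_zero.const_mul_atTop hA))
  filter_upwards [hlog.eventually_gt_atTop C, self_mem_nhdsWithin] with δ hC (hδ : 0 < δ)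
  rw [rate_of_pos hδ, mul_comm]
  gcongr

end Rate

lemma Finset.sum_add_single_sub_single {ι M : Type*} [DecidableEq ι] [AddCommGroup M]
    (s : Finset ι) (f : ι → M) (i j : ι) (e : M) :
    ∑ k ∈ s, (f + Pi.single i e - Pi.single j e : ι → M) k =
      ∑ k ∈ s, f k + (if i ∈ s then e else 0) - (if j ∈ s then e else 0) := by
  simp only [Pi.add_apply, Pi.sub_apply, sum_sub_distrib, sum_add_distrib, sum_pi_single']

lemma Finset.sum_lt_sum_of_le_add_of_lt {ι M : Type*} [AddCommGroup M] [PartialOrder M]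
    [IsOrderedAddMonoid M] [DecidableEq ι] {s : Finset ι} {f g c : ι → M} {a : ι} (ha : a ∈ s)
    (hle : ∀ i ∈ s.erase a, f i ≤ g i + c i) (hlt : f a + ∑ i ∈ s.erase a, c i < g a) :
    ∑ i ∈ s, f i < ∑ i ∈ s, g i :=
  calc ∑ i ∈ s, f i = f a + ∑ i ∈ s.erase a, f i := (add_sum_erase s f ha).symm
    _ ≤ f a + ∑ i ∈ s.erase a, (g i + c i) := by gcongr with i hi; exact hle i hi
    _ = (f a + ∑ i ∈ s.erase a, c i) + ∑ i ∈ s.erase a, g i := by rw [sum_add_distrib]; abel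
    _ < g a + ∑ i ∈ s.erase a, g i := by gcongr
    _ = ∑ i ∈ s, g i := add_sum_erase s g ha

def IsOptimalP2 (K : ℕ) (γ : ℕ → ℝ) (PA PP : ℝ) (τ ε : ℕ → ℝ) : Prop :=
  FeasibleP2 K PA PP τ ε ∧
    ∀ τ' ε' : ℕ → ℝ, FeasibleP2 K PA PP τ' ε' → ObjP2 K γ τ' ε' ≤ ObjP2 K γ τ ε

section P2

variable {K : ℕ} {γ τ ε : ℕ → ℝ} {PA PP : ℝ}

lemma FeasibleP2.time_pos_of_energy_pos (h : FeasibleP2 K PA PP τ ε) {i : ℕ} (hi : i ≤ K)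
    (hε : 0 < ε i) : 0 < τ i := by
  refine (h.1 i hi).lt_of_ne fun h0 => ?_
  have := (h.2.1 i hi).2
  rw [← h0, zero_mul] at this
  linarith

lemma FeasibleP2.energy_zero_le_sum_range (h : FeasibleP2 K PA PP τ ε) {i : ℕ} (hi : 1 ≤ i)
    (hiK : i ≤ K + 1) : ε 0 ≤ ∑ k ∈ range i, ε k :=
  single_le_sum (fun k hk => (h.2.1 k (by have := mem_range.1 hk; omega)).1) (mem_range.2 hi)

lemma FeasibleP2.sum_range_nonneg (h : FeasibleP2 K PA PP τ ε) {i : ℕ} (hiK : i ≤ K + 1) :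
    0 ≤ ∑ k ∈ range i, ε k :=
  sum_nonneg fun k hk => (h.2.1 k (by have := mem_range.1 hk; omega)).1

lemma FeasibleP2.transfer (h : FeasibleP2 K PA PP τ ε) (hPP : 0 < PP) {i j : ℕ} (hi : i ≤ K)
    (hj : j ≤ K) (hij : i ≠ j) {e : ℝ} (he : 0 ≤ e) (hej : e ≤ ε j) :
    FeasibleP2 K PA PP (τ + Pi.single i (e / PP) - Pi.single j (e / PP))
      (ε + Pi.single i e - Pi.single j e) := by
  obtain ⟨hτ, hε, hεsum, hτsum⟩ := h
  have hePP : e / PP * PP = e := div_mul_cancel₀ e hPP.ne'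
  have hea : 0 ≤ e / PP := div_nonneg he hPP.le
  have haj : e / PP ≤ τ j := by rw [div_le_iff₀ hPP]; linarith [(hε j hj).2]
  have hmem : i ∈ range (K + 1) ∧ j ∈ range (K + 1) := by simp only [mem_range]; omega
  refine ⟨fun k hk => ?_, fun k hk => ?_, ?_, ?_⟩
  · simp only [Pi.add_apply, Pi.sub_apply, Pi.single_apply]
    split_ifs <;> subst_vars <;> first | omega | linarith [hτ k hk]
  · obtain ⟨hεk, hεk'⟩ := hε k hk
    simp only [Pi.add_apply, Pi.sub_apply, Pi.single_apply]
    split_ifs <;> subst_vars <;> first | omega | constructor <;> nlinarith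
  · rw [sum_add_single_sub_single, if_pos hmem.1, if_pos hmem.2]; linarith
  · rw [sum_add_single_sub_single, if_pos hmem.1, if_pos hmem.2]; linarith

lemma exists_ne_zero_of_objP2_ne_zero (h : ObjP2 K γ τ ε ≠ 0) : ∃ j < K, ε j ≠ 0 := by
  contrapose! h
  refine sum_eq_zero fun i hi => ?_
  rw [sum_eq_zero fun j hj => h j ?_, mul_zero, rate_zero_right]
  have := mem_Icc.1 hi; have := mem_range.1 hj; omega

lemma exists_feasibleP2_objP2_pos (hK : 1 ≤ K) (hγ : 0 < γ 1) (hPA : 0 < PA) (hPP : PA ≤ PP) :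
    ∃ τ ε, FeasibleP2 K PA PP τ ε ∧ 0 < ObjP2 K γ τ ε := by
  refine ⟨Pi.single 0 (1 / 2) + Pi.single 1 (1 / 2), Pi.single 0 (PA / 2), ⟨?_, ?_, ?_, ?_⟩, ?_⟩
  · intro i _
    simp only [Pi.add_apply, Pi.single_apply]
    split_ifs <;> norm_num
  · intro i _
    simp only [Pi.add_apply, Pi.single_apply]
    split_ifs <;> subst_vars <;> first | omega | constructor <;> linarith
  · rw [sum_pi_single', if_pos (by simp)]; linarith
  · simp only [Pi.add_apply, sum_add_distrib, sum_pi_single', mem_range,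
      if_pos (show 0 < K + 1 by omega), if_pos (show 1 < K + 1 by omega)]
    norm_num
  · unfold ObjP2
    rw [sum_eq_single 1]
    · rw [sum_range_one, Pi.add_apply, Pi.single_eq_of_ne one_ne_zero, Pi.single_eq_same,
        Pi.single_eq_same, zero_add]
      exact rate_pos (by norm_num) (by positivity)
    · intro i hi hi1
      have hi0 : i ≠ 0 := by have := mem_Icc.1 hi; omega
      rw [Pi.add_apply, Pi.single_eq_of_ne hi0, Pi.single_eq_of_ne hi1, add_zero, rate_zero_left]
    · exact fun h => absurd (mem_Icc.2 ⟨le_rfl, hK⟩) h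

lemma IsOptimalP2.energy_eq_zero_of_sum_range_eq_zero (h : IsOptimalP2 K γ PA PP τ ε)
    (hPP : 0 < PP) (hγ : ∀ i, 1 ≤ i → i ≤ K → 0 < γ i) {j : ℕ} (hj : 1 ≤ j) (hjK : j ≤ K)
    (hS : ∑ k ∈ range j, ε k = 0) : ε j = 0 := by
  obtain ⟨hfeas, hopt⟩ := h
  by_contra hne
  have hεj : 0 < ε j := (hfeas.2.1 j hjK).1.lt_of_ne' hne
  have hτj : 0 < τ j := hfeas.time_pos_of_energy_pos hjK hεj
  set e := ε j / 2 with he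
  set τ' := τ + Pi.single 0 (e / PP) - Pi.single j (e / PP)
  set ε' := ε + Pi.single 0 e - Pi.single j e
  have hfeas' : FeasibleP2 K PA PP τ' ε' :=
    hfeas.transfer hPP K.zero_le hjK (by omega) (by positivity) (by linarith)
  have hS' : ∀ i, 1 ≤ i → ∑ k ∈ range i, ε' k =
      ∑ k ∈ range i, ε k + e - if j < i then e else 0 := fun i hi => by
    rw [sum_add_single_sub_single, if_pos (mem_range.2 hi)]; simp only [mem_range]
  refine (hopt τ' ε' hfeas').not_gt (sum_lt_sum (fun i hi => ?_) ⟨j, mem_Icc.2 ⟨hj, hjK⟩, ?_⟩)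
  · obtain ⟨hi1, hiK⟩ := mem_Icc.1 hi
    have hγi := (hγ i hi1 hiK).le
    rcases eq_or_ne i j with rfl | hij
    · rw [hS, mul_zero, rate_zero_right]
      exact rate_nonneg (mul_nonneg hγi (hfeas'.sum_range_nonneg (by omega)))
    · have hτ'i : τ' i = τ i := by simp [τ', hij, show i ≠ 0 by omega]
      rw [hτ'i]
      refine rate_le_rate (mul_nonneg hγi (hfeas.sum_range_nonneg (by omega)))
        (mul_le_mul_of_nonneg_left ?_ hγi)
      rw [hS' i hi1]
      split_ifs <;> linarith
  · have hτ'j : τ' j = τ j - e / PP := by simp [τ', show j ≠ 0 by omega]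
    have hej : e / PP < τ j := by
      rw [div_lt_iff₀ hPP]; linarith [(hfeas.2.1 j hjK).2]
    rw [hS, mul_zero, rate_zero_right, hτ'j, hS' j hj, hS, if_neg (lt_irrefl j)]
    exact rate_pos (by linarith) (mul_pos (hγ j hj hjK) (by linarith))

lemma IsOptimalP2.energy_zero_pos (h : IsOptimalP2 K γ PA PP τ ε) (hPP : 0 < PP)
    (hγ : ∀ i, 1 ≤ i → i ≤ K → 0 < γ i) (hobj : 0 < ObjP2 K γ τ ε) : 0 < ε 0 := by
  classical
  have hex : ∃ j < K, ε j ≠ 0 := exists_ne_zero_of_objP2_ne_zero hobj.ne'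
  obtain ⟨hjK, hj⟩ := Nat.find_spec hex
  have hS : ∑ k ∈ range (Nat.find hex), ε k = 0 := sum_eq_zero fun k hk => by
    by_contra hne
    exact Nat.find_min hex (mem_range.1 hk) ⟨(mem_range.1 hk).trans hjK, hne⟩
  rcases Nat.eq_zero_or_pos (Nat.find hex) with hj0 | hj1
  · rw [hj0] at hj
    exact (h.1.2.1 0 K.zero_le).1.lt_of_ne' hj
  · exact absurd (h.energy_eq_zero_of_sum_range_eq_zero hPP hγ hj1 hjK.le hS) hj

lemma IsOptimalP2.rate_le_of_time_eq_zero (h : IsOptimalP2 K γ PA PP τ ε) (hPP : 0 < PP)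
    (hγ : ∀ i, 1 ≤ i → i ≤ K → 0 ≤ γ i) {m : ℕ} (hm : 1 ≤ m) (hmK : m ≤ K) (hτm : τ m = 0)
    {δ : ℝ} (hδ : 0 < δ) (hδε : 2 * PP * δ ≤ ε 0) :
    rate δ (γ m * ε 0 / 2) ≤ PP * (∑ i ∈ Icc 1 K, γ i) * δ := by
  obtain ⟨hfeas, hopt⟩ := h
  by_contra! hgain
  set e := PP * δ with he
  have he0 : 0 < e := mul_pos hPP hδ
  set τ' := τ + Pi.single m (e / PP) - Pi.single 0 (e / PP)
  set ε' := ε + Pi.single m e - Pi.single 0 e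
  have hfeas' : FeasibleP2 K PA PP τ' ε' :=
    hfeas.transfer hPP hmK K.zero_le (by omega) he0.le (by linarith)
  have hS' : ∀ i, 1 ≤ i → ∑ k ∈ range i, ε k - e ≤ ∑ k ∈ range i, ε' k := fun i hi => by
    rw [sum_add_single_sub_single, if_pos (mem_range.2 hi)]
    split_ifs <;> linarith
  have hloss : ∀ i ∈ (Icc 1 K).erase m, rate (τ i) (γ i * ∑ k ∈ range i, ε k) ≤
      rate (τ' i) (γ i * ∑ k ∈ range i, ε' k) + γ i * e := fun i hi => by
    obtain ⟨him, hi⟩ := mem_erase.1 hi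
    obtain ⟨hi1, hiK⟩ := mem_Icc.1 hi
    have hγi := hγ i hi1 hiK
    have hτ'i : τ' i = τ i := by simp [τ', him, show i ≠ 0 by omega]
    rw [hτ'i]
    refine rate_le_rate_add_of_sub_le (mul_nonneg hγi he0.le) ?_ ?_
    · exact mul_le_mul_of_nonneg_left
        (by linarith [hfeas.energy_zero_le_sum_range hi1 (by omega)]) hγi
    · rw [← mul_sub]
      exact mul_le_mul_of_nonneg_left (hS' i hi1) hγi
  have hgain' : rate δ (γ m * ε 0 / 2) ≤ rate (τ' m) (γ m * ∑ k ∈ range m, ε' k) := by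
    have hτ'm : τ' m = δ := by
      simp [τ', hτm, he, hPP.ne', show m ≠ 0 by omega]
    have hSm := hfeas.energy_zero_le_sum_range hm (by omega)
    have hγm := hγ m hm hmK
    rw [hτ'm]
    refine rate_le_rate (by have := (hfeas.2.1 0 K.zero_le).1; positivity) ?_
    nlinarith [mul_le_mul_of_nonneg_left (hS' m hm) hγm]
  refine (hopt τ' ε' hfeas').not_gt (sum_lt_sum_of_le_add_of_lt (mem_Icc.2 ⟨hm, hmK⟩) hloss ?_)
  rw [hτm, rate_zero_left, zero_add, ← sum_mul]
  calc (∑ i ∈ (Icc 1 K).erase m, γ i) * e ≤ (∑ i ∈ Icc 1 K, γ i) * e := by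
        gcongr
        · exact fun i hi _ => hγ i (mem_Icc.1 hi).1 (mem_Icc.1 hi).2
        · exact erase_subset m _
    _ = PP * (∑ i ∈ Icc 1 K, γ i) * δ := by rw [he]; ring
    _ < rate δ (γ m * ε 0 / 2) := hgain
    _ ≤ _ := hgain'

lemma IsOptimalP2.time_pos (h : IsOptimalP2 K γ PA PP τ ε) (hPP : 0 < PP)
    (hγ : ∀ i, 1 ≤ i → i ≤ K → 0 < γ i) (hε0 : 0 < ε 0) {m : ℕ} (hm : 1 ≤ m) (hmK : m ≤ K) :
    0 < τ m := by
  by_contra! hτm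
  have hA : 0 < γ m * ε 0 / 2 := by have := hγ m hm hmK; positivity
  obtain ⟨δ, hgain, hδ, hδε⟩ :=
    ((eventually_mul_lt_rate hA (PP * ∑ i ∈ Icc 1 K, γ i)).and
      (Ioc_mem_nhdsGT (show 0 < ε 0 / (2 * PP) by positivity))).exists
  rw [le_div_iff₀ (by positivity), mul_comm] at hδε
  exact hgain.not_ge (h.rate_le_of_time_eq_zero hPP (fun i h1 h2 => (hγ i h1 h2).le) hm hmK
    (le_antisymm hτm (h.1.1 m hmK)) hδ hδε)

end P2

/-- Every optimal point `(τ*, ε*)` of problem (P2) satisfies `τ_i* > 0` for every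
`i = 0, 1, …, K`. -/
theorem stmt0 (K : ℕ) (hK : 1 ≤ K) (γ : ℕ → ℝ)
    (hγ : ∀ i, 1 ≤ i → i ≤ K → 0 < γ i)
    (PA PP : ℝ) (hPA : 0 < PA) (hPP : PA < PP)
    (τ ε : ℕ → ℝ) (hfeas : FeasibleP2 K PA PP τ ε)
    (hopt : ∀ τ' ε' : ℕ → ℝ, FeasibleP2 K PA PP τ' ε' →
      ObjP2 K γ τ' ε' ≤ ObjP2 K γ τ ε) :
    ∀ i ≤ K, 0 < τ i := by
  have hPP0 : 0 < PP := hPA.trans hPP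
  have hoptimal : IsOptimalP2 K γ PA PP τ ε := ⟨hfeas, hopt⟩
  obtain ⟨τ₀, ε₀, hfeas₀, hpos₀⟩ :=
    exists_feasibleP2_objP2_pos (γ := γ) hK (hγ 1 le_rfl hK) hPA hPP.le
  have hε0 : 0 < ε 0 :=
    hoptimal.energy_zero_pos hPP0 hγ (hpos₀.trans_le (hopt τ₀ ε₀ hfeas₀))
  intro i hi
  rcases Nat.eq_zero_or_pos i with rfl | hi1
  · exact hfeas.time_pos_of_energy_pos hi hε0
  · exact hoptimal.time_pos hPP0 hγ hε0 hi1 hi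
end

section
/- Every maximizer τ* of G over the feasible set satisfies Σ_{i=1}^n τ_i* = S, τ_i* > 0 for all i, and γ_i/τ_i* = γ_j/τ_j* for all indices i, j; consequently, τ_i* = S·γ_i / (Σ_{j=1}^n γ_j) is the unique maximizer of G over the feasible set. -/
/-- The objective `G(τ) = Σ_{i=1}^n r(τ_i, γ_i·P_A)`. -/
noncomputable def ObjG (n : ℕ) (γ : ℕ → ℝ) (PA : ℝ) (τ : ℕ → ℝ) : ℝ :=
  ∑ i ∈ Finset.Icc 1 n, rate (τ i) (γ i * PA)

/-- The feasible set: `τ_i ≥ 0` for `1 ≤ i ≤ n` and `Σ_{i=1}^n τ_i ≤ S`. -/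
def FeasibleG (n : ℕ) (S : ℝ) (τ : ℕ → ℝ) : Prop :=
  (∀ i, 1 ≤ i → i ≤ n → 0 ≤ τ i) ∧ ∑ i ∈ Finset.Icc 1 n, τ i ≤ S

open Finset Real

/-- `∂r(t, a)/∂t` at any `t` with `a / t = u`. -/
noncomputable def rateSlope (u : ℝ) : ℝ := log (1 + u) - u / (1 + u)

lemma rateSlope_nonneg {u : ℝ} (hu : 0 ≤ u) : 0 ≤ rateSlope u := by
  have h := one_sub_inv_le_log_of_pos (by linarith : (0 : ℝ) < 1 + u)
  have h' : 1 - (1 + u)⁻¹ = u / (1 + u) := by field_simp; ring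
  unfold rateSlope
  linarith

section Tangent

variable {t a u : ℝ}

lemma tangent_sub_rate (ht : 0 < t) (ha : 0 ≤ a) (hu : 0 < 1 + u) :
    rateSlope u * t + a / (1 + u) - rate t a =
      t * ((t + a) / (t * (1 + u)) - 1 - log ((t + a) / (t * (1 + u)))) := by
  have hta : 0 < t + a := by linarith
  rw [rate, if_pos ht, show 1 + a / t = (t + a) / t by field_simp, rateSlope,
    log_div hta.ne' ht.ne', log_div hta.ne' (by positivity), log_mul ht.ne' hu.ne']
  field_simp
  ring

lemma rate_le_tangent (ht : 0 ≤ t) (ha : 0 ≤ a) (hu : 0 < 1 + u) :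
    rate t a ≤ rateSlope u * t + a / (1 + u) := by
  rcases ht.eq_or_lt with rfl | ht
  · simp only [rate, lt_irrefl, if_false, mul_zero, zero_add]
    positivity
  · have hx : 0 < (t + a) / (t * (1 + u)) := div_pos (by linarith) (by positivity)
    have := tangent_sub_rate ht ha hu
    nlinarith [log_le_sub_one_of_pos hx]

lemma rate_lt_tangent (ht : 0 ≤ t) (ha : 0 < a) (hu : 0 < 1 + u) (hne : t * u ≠ a) :
    rate t a < rateSlope u * t + a / (1 + u) := by
  rcases ht.eq_or_lt with rfl | ht
  · simp only [rate, lt_irrefl, if_false, mul_zero, zero_add]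
    positivity
  · have hx : 0 < (t + a) / (t * (1 + u)) := by positivity
    have hx1 : (t + a) / (t * (1 + u)) ≠ 1 := by
      rw [Ne, div_eq_one_iff_eq (by positivity)]
      contrapose! hne
      linarith
    have := tangent_sub_rate ht ha.le hu
    nlinarith [log_lt_sub_one_of_pos hx hx1]

lemma rate_eq_tangent (ht : 0 < t) (hu : 0 < 1 + u) (heq : t * u = a) :
    rate t a = rateSlope u * t + a / (1 + u) := by
  subst heq
  rw [rate, if_pos ht, rateSlope, mul_div_cancel_left₀ u ht.ne']
  field_simp
  ring

end Tangent

section Sum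

variable {ι : Type*} {s : Finset ι} {a c τ : ι → ℝ} {u S : ℝ}

lemma sum_rate_lt_tangent (hτ : ∀ i ∈ s, 0 ≤ τ i) (ha : ∀ i ∈ s, 0 < a i) (hu : 0 < 1 + u)
    (hne : ∃ i ∈ s, τ i * u ≠ a i) :
    ∑ i ∈ s, rate (τ i) (a i) < rateSlope u * ∑ i ∈ s, τ i + (∑ i ∈ s, a i) / (1 + u) := by
  rw [mul_sum, sum_div, ← sum_add_distrib]
  obtain ⟨i, hi, hne⟩ := hne
  exact sum_lt_sum (fun j hj => rate_le_tangent (hτ j hj) (ha j hj).le hu)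
    ⟨i, hi, rate_lt_tangent (hτ i hi) (ha i hi) hu hne⟩

lemma sum_rate_eq_tangent (hc : ∀ i ∈ s, 0 < c i) (hu : 0 < 1 + u)
    (heq : ∀ i ∈ s, c i * u = a i) :
    ∑ i ∈ s, rate (c i) (a i) = rateSlope u * ∑ i ∈ s, c i + (∑ i ∈ s, a i) / (1 + u) := by
  rw [mul_sum, sum_div, ← sum_add_distrib]
  exact sum_congr rfl fun i hi => rate_eq_tangent (hc i hi) hu (heq i hi)

lemma sum_rate_lt_sum_rate (ha : ∀ i ∈ s, 0 < a i) (hu : 0 ≤ u)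
    (hc : ∀ i ∈ s, 0 < c i) (hcS : ∑ i ∈ s, c i = S) (hcu : ∀ i ∈ s, c i * u = a i)
    (hτ : ∀ i ∈ s, 0 ≤ τ i) (hτS : ∑ i ∈ s, τ i ≤ S) (hne : ∃ i ∈ s, τ i * u ≠ a i) :
    ∑ i ∈ s, rate (τ i) (a i) < ∑ i ∈ s, rate (c i) (a i) := by
  have hu' : 0 < 1 + u := by linarith
  rw [sum_rate_eq_tangent hc hu' hcu, hcS]
  calc ∑ i ∈ s, rate (τ i) (a i)
      < rateSlope u * ∑ i ∈ s, τ i + (∑ i ∈ s, a i) / (1 + u) :=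
        sum_rate_lt_tangent hτ ha hu' hne
    _ ≤ rateSlope u * S + (∑ i ∈ s, a i) / (1 + u) := by
        gcongr
        exact rateSlope_nonneg hu

end Sum

/-- Every maximizer `τ*` of `G` over the feasible set satisfies `Σ τ_i* = S`,
`τ_i* > 0` for all `i`, and `γ_i/τ_i* = γ_j/τ_j*` for all `i, j`; consequently
`τ_i* = S·γ_i / (Σ_{j=1}^n γ_j)`, i.e. the maximizer is unique. -/
theorem stmt6 (n : ℕ) (hn : 1 ≤ n) (γ : ℕ → ℝ)
    (hγ : ∀ i, 1 ≤ i → i ≤ n → 0 < γ i)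
    (PA S : ℝ) (hPA : 0 < PA) (hS : 0 < S)
    (τ : ℕ → ℝ) (hfeas : FeasibleG n S τ)
    (hopt : ∀ τ' : ℕ → ℝ, FeasibleG n S τ' → ObjG n γ PA τ' ≤ ObjG n γ PA τ) :
    (∑ i ∈ Finset.Icc 1 n, τ i = S) ∧
    (∀ i, 1 ≤ i → i ≤ n → 0 < τ i) ∧
    (∀ i j, 1 ≤ i → i ≤ n → 1 ≤ j → j ≤ n → γ i / τ i = γ j / τ j) ∧
    (∀ i, 1 ≤ i → i ≤ n → τ i = S * γ i / ∑ j ∈ Finset.Icc 1 n, γ j) := by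
  have hγ' (i) (hi : i ∈ Icc 1 n) : 0 < γ i := hγ i (mem_Icc.1 hi).1 (mem_Icc.1 hi).2
  set Γ := ∑ j ∈ Icc 1 n, γ j
  have hΓ : 0 < Γ := sum_pos hγ' (nonempty_Icc.2 hn)
  set c : ℕ → ℝ := fun i => S * γ i / Γ
  set u := PA * Γ / S
  have hc (i) (hi : i ∈ Icc 1 n) : 0 < c i := by have := hγ' i hi; positivity
  have hcS : ∑ i ∈ Icc 1 n, c i = S := by
    rw [← sum_div, ← mul_sum, mul_div_assoc, div_self hΓ.ne', mul_one]
  have hcu (i) (_ : i ∈ Icc 1 n) : c i * u = γ i * PA := by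
    simp only [c, u]
    field_simp
  have hτu (i) (hi : i ∈ Icc 1 n) : τ i * u = γ i * PA := by
    by_contra hne
    refine (hopt c ⟨fun i h1 h2 => (hc i (mem_Icc.2 ⟨h1, h2⟩)).le, hcS.le⟩).not_gt ?_
    exact sum_rate_lt_sum_rate (fun i hi => by have := hγ' i hi; positivity) (by positivity)
      hc hcS hcu (fun i hi => hfeas.1 i (mem_Icc.1 hi).1 (mem_Icc.1 hi).2) hfeas.2 ⟨i, hi, hne⟩
  have hτc (i) (h1 : 1 ≤ i) (h2 : i ≤ n) : τ i = c i := by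
    have hi := mem_Icc.2 ⟨h1, h2⟩
    exact mul_right_cancel₀ (by positivity : u ≠ 0) ((hτu i hi).trans (hcu i hi).symm)
  refine ⟨(sum_congr rfl fun i hi => hτc i (mem_Icc.1 hi).1 (mem_Icc.1 hi).2).trans hcS,
    fun i h1 h2 => hτc i h1 h2 ▸ hc i (mem_Icc.2 ⟨h1, h2⟩), fun i j hi1 hi2 hj1 hj2 => ?_, hτc⟩
  rw [hτc i hi1 hi2, hτc j hj1 hj2]
  have := hγ i hi1 hi2
  have := hγ j hj1 hj2
  simp only [c]
  field_simp
end

section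
/- Let E > 0, T > 0, and γ1, γ2 > 0. The function φ(t) = t·log(1 + γ1·E/t) + (T−t)·log(1 + γ2·E/(T−t)) defined on the open interval (0,T) attains its maximum over (0,T) at t* = γ1·T/(γ1+γ2); that is, φ(t) ≤ φ(γ1·T/(γ1+γ2)) for every t ∈ (0,T). -/
/-! Writing `s = T - t`, both terms have the form `t · log x` with `t · x` affine in `t`, so by
concavity of `log` (Jensen with weights `t / T` and `s / T`) the sum is at most
`T · log (1 + (γ1 + γ2) E / T)`. At `t* = γ1 T / (γ1 + γ2)` the two arguments of `log`
coincide with `1 + (γ1 + γ2) E / T`, so this bound is attained there. -/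

theorem ConcaveOn.mul_add_mul_le_add_mul {S : Set ℝ} {f : ℝ → ℝ} (hf : ConcaveOn ℝ S f)
    {t s x y : ℝ} (ht : 0 < t) (hs : 0 < s) (hx : x ∈ S) (hy : y ∈ S) :
    t * f x + s * f y ≤ (t + s) * f ((t * x + s * y) / (t + s)) := by
  have hts : 0 < t + s := add_pos ht hs
  have jensen := hf.2 hx hy (div_pos ht hts).le (div_pos hs hts).le (by field_simp)
  simp only [smul_eq_mul] at jensen
  calc t * f x + s * f y = (t + s) * (t / (t + s) * f x + s / (t + s) * f y) := by
        field_simp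
    _ ≤ (t + s) * f (t / (t + s) * x + s / (t + s) * y) := by gcongr
    _ = (t + s) * f ((t * x + s * y) / (t + s)) := by
        congr 2
        field_simp

/-- For `E, T, γ1, γ2 > 0`, the function
`φ(t) = t·log(1 + γ1·E/t) + (T−t)·log(1 + γ2·E/(T−t))` on `(0,T)` attains its maximum
at `t* = γ1·T/(γ1+γ2)`: `φ(t) ≤ φ(t*)` for every `t ∈ (0,T)`. -/
theorem stmt10 (E T γ1 γ2 : ℝ) (hE : 0 < E) (hT : 0 < T) (h1 : 0 < γ1) (h2 : 0 < γ2) :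
    ∀ t ∈ Set.Ioo (0 : ℝ) T,
      t * Real.log (1 + γ1 * E / t) + (T - t) * Real.log (1 + γ2 * E / (T - t)) ≤
        (γ1 * T / (γ1 + γ2)) * Real.log (1 + γ1 * E / (γ1 * T / (γ1 + γ2))) +
        (T - γ1 * T / (γ1 + γ2)) * Real.log (1 + γ2 * E / (T - γ1 * T / (γ1 + γ2))) := by
  rintro t ⟨ht, htT⟩
  have hs : 0 < T - t := sub_pos.2 htT
  have hγ : 0 < γ1 + γ2 := add_pos h1 h2
  have hT' : T - γ1 * T / (γ1 + γ2) = γ2 * T / (γ1 + γ2) := by field_simp; ring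
  have hmax : (γ1 * T / (γ1 + γ2)) * Real.log (1 + γ1 * E / (γ1 * T / (γ1 + γ2))) +
      (T - γ1 * T / (γ1 + γ2)) * Real.log (1 + γ2 * E / (T - γ1 * T / (γ1 + γ2))) =
      T * Real.log (1 + (γ1 + γ2) * E / T) := by
    have hx : γ1 * E / (γ1 * T / (γ1 + γ2)) = (γ1 + γ2) * E / T := by field_simp
    have hy : γ2 * E / (γ2 * T / (γ1 + γ2)) = (γ1 + γ2) * E / T := by field_simp
    rw [hT', hx, hy]
    field_simp
  have hmean : (t * (1 + γ1 * E / t) + (T - t) * (1 + γ2 * E / (T - t))) / (t + (T - t)) =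
      1 + (γ1 + γ2) * E / T := by
    field_simp; ring
  have jensen := strictConcaveOn_log_Ioi.concaveOn.mul_add_mul_le_add_mul ht hs
    (x := 1 + γ1 * E / t) (y := 1 + γ2 * E / (T - t))
    (by simp only [Set.mem_Ioi]; positivity) (by simp only [Set.mem_Ioi]; positivity)
  rwa [hmean, add_sub_cancel, ← hmax] at jensen
end

section
/- For every optimal point (τ*, ε_D*, ε_U*) of problem (P1∞) and every index 1 ≤ i ≤ K with τ_i* > 0, the energy-causality constraint is tight: ε_{U,i}* = η_i·g_{D,i}·Σ_{j=0}^{i−1} ε_{D,j}*. -/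
/-- Feasible set of problem (P1∞): `τ_i ≥ 0`, `0 ≤ ε_{D,i} ≤ τ_i·P_P` for `0 ≤ i ≤ K`,
`ε_{U,i} ≥ 0` for `1 ≤ i ≤ K`, `Σ ε_{D,i} ≤ P_A`, `Σ τ_i ≤ 1`, and the energy-causality
constraints `ε_{U,i} ≤ η_i·g_{D,i}·Σ_{j=0}^{i−1} ε_{D,j}`. -/
def FeasibleP1inf (K : ℕ) (PA PP : ℝ) (η gD : ℕ → ℝ) (τ εD εU : ℕ → ℝ) : Prop :=
  (∀ i ≤ K, 0 ≤ τ i) ∧ (∀ i ≤ K, 0 ≤ εD i ∧ εD i ≤ τ i * PP) ∧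
  (∀ i, 1 ≤ i → i ≤ K → 0 ≤ εU i) ∧
  (∑ i ∈ Finset.range (K + 1), εD i ≤ PA) ∧ (∑ i ∈ Finset.range (K + 1), τ i ≤ 1) ∧
  (∀ i, 1 ≤ i → i ≤ K → εU i ≤ η i * gD i * ∑ j ∈ Finset.range i, εD j)

/-- Objective of (P1∞): `Σ_{i=1}^K r(τ_i, (g_{U,i}/σ_i²)·ε_{U,i})`. -/
noncomputable def ObjP1 (K : ℕ) (gU σ2 : ℕ → ℝ) (τ εU : ℕ → ℝ) : ℝ :=
  ∑ i ∈ Finset.Icc 1 K, rate (τ i) (gU i / σ2 i * εU i)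

lemma rate_strictMonoOn {t : ℝ} (ht : 0 < t) : StrictMonoOn (rate t) (Set.Ioi (-t)) := by
  intro x hx y _ hxy
  have hx' : 0 < 1 + x / t := by
    rw [one_add_div ht.ne']
    exact div_pos (neg_lt_iff_pos_add'.mp hx) ht
  simp only [rate, if_pos ht]
  gcongr

lemma FeasibleP1inf.update_εU {K : ℕ} {PA PP : ℝ} {η gD τ εD εU : ℕ → ℝ}
    (hfeas : FeasibleP1inf K PA PP η gD τ εD εU) {i : ℕ} {v : ℝ} (hv₀ : 0 ≤ v)
    (hv : v ≤ η i * gD i * ∑ j ∈ Finset.range i, εD j) :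
    FeasibleP1inf K PA PP η gD τ εD (Function.update εU i v) := by
  obtain ⟨hτ, hεD, hεU, hεDsum, hτsum, hcaus⟩ := hfeas
  refine ⟨hτ, hεD, fun j hj hjK => ?_, hεDsum, hτsum, fun j hj hjK => ?_⟩ <;>
    rcases eq_or_ne j i with rfl | hji
  · simpa using hv₀
  · simpa [hji] using hεU j hj hjK
  · simpa using hv
  · simpa [hji] using hcaus j hj hjK

lemma ObjP1_lt_update {K : ℕ} {gU σ2 τ εU : ℕ → ℝ} {i : ℕ} (hi : 1 ≤ i) (hiK : i ≤ K)
    (hτ : 0 < τ i) (hc : 0 < gU i / σ2 i) {v : ℝ} (hεU : 0 ≤ εU i) (hv : εU i < v) :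
    ObjP1 K gU σ2 τ εU < ObjP1 K gU σ2 τ (Function.update εU i v) := by
  have hmono : rate (τ i) (gU i / σ2 i * εU i) < rate (τ i) (gU i / σ2 i * v) :=
    have hx : -τ i < gU i / σ2 i * εU i := (neg_neg_of_pos hτ).trans_le (mul_nonneg hc.le hεU)
    rate_strictMonoOn hτ hx (hx.trans (mul_lt_mul_of_pos_left hv hc))
      (mul_lt_mul_of_pos_left hv hc)
  refine Finset.sum_lt_sum (fun j _ => ?_) ⟨i, Finset.mem_Icc.mpr ⟨hi, hiK⟩, by simpa using hmono⟩
  rcases eq_or_ne j i with rfl | hji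
  · simpa using hmono.le
  · simp [hji]

theorem stmt11_general (K : ℕ) (η gD gU σ2 : ℕ → ℝ)
    (hgU : ∀ i, 1 ≤ i → i ≤ K → 0 < gU i) (hσ2 : ∀ i, 1 ≤ i → i ≤ K → 0 < σ2 i)
    (PA PP : ℝ)
    (τ εD εU : ℕ → ℝ) (hfeas : FeasibleP1inf K PA PP η gD τ εD εU)
    (hopt : ∀ τ' εD' εU' : ℕ → ℝ, FeasibleP1inf K PA PP η gD τ' εD' εU' →
      ObjP1 K gU σ2 τ' εU' ≤ ObjP1 K gU σ2 τ εU) :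
    ∀ i, 1 ≤ i → i ≤ K → 0 < τ i →
      εU i = η i * gD i * ∑ j ∈ Finset.range i, εD j := by
  intro i hi hiK hτ
  have hεU : 0 ≤ εU i := hfeas.2.2.1 i hi hiK
  refine (hfeas.2.2.2.2.2 i hi hiK).eq_of_not_lt fun hlt => ?_
  -- Raising `εU i` to the causality bound keeps the point feasible and strictly improves it.
  have hfeas' := hfeas.update_εU (hεU.trans hlt.le) le_rfl
  exact (hopt τ εD _ hfeas').not_gt
    (ObjP1_lt_update hi hiK hτ (div_pos (hgU i hi hiK) (hσ2 i hi hiK)) hεU hlt)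

/-- For every optimal point of (P1∞) and every `1 ≤ i ≤ K` with `τ_i* > 0`, the
energy-causality constraint is tight: `ε_{U,i}* = η_i·g_{D,i}·Σ_{j=0}^{i−1} ε_{D,j}*`. -/
theorem stmt11 (K : ℕ) (hK : 1 ≤ K) (η gD gU σ2 : ℕ → ℝ)
    (hη : ∀ i, 1 ≤ i → i ≤ K → 0 < η i) (hgD : ∀ i, 1 ≤ i → i ≤ K → 0 < gD i)
    (hgU : ∀ i, 1 ≤ i → i ≤ K → 0 < gU i) (hσ2 : ∀ i, 1 ≤ i → i ≤ K → 0 < σ2 i)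
    (PA PP : ℝ) (hPA : 0 < PA) (hPP : PA < PP)
    (τ εD εU : ℕ → ℝ) (hfeas : FeasibleP1inf K PA PP η gD τ εD εU)
    (hopt : ∀ τ' εD' εU' : ℕ → ℝ, FeasibleP1inf K PA PP η gD τ' εD' εU' →
      ObjP1 K gU σ2 τ' εU' ≤ ObjP1 K gU σ2 τ εU) :
    ∀ i, 1 ≤ i → i ≤ K → 0 < τ i →
      εU i = η i * gD i * ∑ j ∈ Finset.range i, εD j :=
  stmt11_general K η gD gU σ2 hgU hσ2 PA PP τ εD εU hfeas hopt
end
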